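/- Let σ ∈ (0,1) be a quadratic irrational, i.e. an irrational real number which is a root of a quadratic polynomial with integer coefficients, and let a ∈ ℝ. Define b̃ : 𝕋 → ℝ on the torus 𝕋 = ℝ/2πℤ by b̃ = 1_{[a, a+σπ]} − 1_{[a+σπ, a+2σπ]}, and set β̃_k = ∫_𝕋 b̃(x) e^{−ikx} dx for k ∈ ℤ. Then β̃_0 = 0 and there exists C > 0 such that |β̃_k| ≥ C/|k|³ for every k ∈ ℤ∖{0}. -/

import Mathlib

open MeasureTheory Set Real

lemma quad_liouville (σ : ℝ) (hirr : Irrational σ)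
    (hquad : ∃ A B C : ℤ, A ≠ 0 ∧ (A:ℝ) * σ^2 + (B:ℝ) * σ + (C:ℝ) = 0) :
    ∃ c > (0:ℝ), ∀ (m k : ℤ), k ≠ 0 → c / (k:ℝ)^2 ≤ |σ - (m:ℝ) / (k:ℝ)| := by
  obtain ⟨A, B, C, hA, hroot⟩ := hquad
  set f : Polynomial ℤ := Polynomial.C A * Polynomial.X ^ 2 + Polynomial.C B * Polynomial.X + Polynomial.C C with hf
  have hdeg : f.natDegree = 2 := Polynomial.natDegree_quadratic hA
  have hf0 : f ≠ 0 := by intro h; rw [h] at hdeg; simp at hdeg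
  have heval : Polynomial.eval σ (f.map (algebraMap ℤ ℝ)) = 0 := by
    simp [hf, Polynomial.eval_map]
    linarith [hroot]
  obtain ⟨A₀, hA₀, H⟩ := Liouville.exists_pos_real_of_irrational_root hirr hf0 heval
  rw [hdeg] at H
  refine ⟨1 / A₀, by positivity, fun m k hk => ?_⟩
  have hk1 : 1 ≤ k.natAbs := Int.natAbs_pos.mpr hk
  set b : ℕ := k.natAbs - 1 with hbdef
  have hb1 : ((b:ℝ) + 1) = |(k:ℝ)| := by
    have : (b : ℝ) = (k.natAbs : ℝ) - 1 := by
      rw [hbdef]; push_cast [Nat.cast_sub hk1]; ring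
    rw [this]
    push_cast [Nat.cast_natAbs]
    ring
  set m' : ℤ := if 0 < k then m else -m with hm'
  have hfrac : (m' : ℝ) / ((b:ℝ) + 1) = (m:ℝ) / (k:ℝ) := by
    rw [hb1, hm']
    rcases lt_or_gt_of_ne hk with h | h
    · rw [if_neg (not_lt.mpr h.le), abs_of_neg (by exact_mod_cast h : ((k:ℝ) < 0))]
      push_cast; field_simp
    · rw [if_pos h, abs_of_pos (by exact_mod_cast h : (0:ℝ) < (k:ℝ))]
  have := H m' b
  rw [hfrac, hb1] at this
  have hk0 : (k:ℝ) ≠ 0 := Int.cast_ne_zero.mpr hk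
  have habs : |(k:ℝ)|^2 = (k:ℝ)^2 := sq_abs _
  rw [habs] at this
  rw [div_le_iff₀ (by positivity), div_le_iff₀ hA₀]
  nlinarith [this, sq_nonneg (k:ℝ)]

lemma norm_one_sub_exp_mul_I (θ : ℝ) :
    ‖(1:ℂ) - Complex.exp (θ * Complex.I)‖ = 2 * |Real.sin (θ/2)| := by
  rw [Complex.exp_mul_I]
  have h : (1:ℂ) - (Complex.cos θ + Complex.sin θ * Complex.I)
      = ((1 - Real.cos θ : ℝ) : ℂ) + ((-Real.sin θ : ℝ) : ℂ) * Complex.I := by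
    push_cast; ring
  rw [h, Complex.norm_add_mul_I]
  have key : (1 - Real.cos θ)^2 + (-Real.sin θ)^2 = (2*Real.sin (θ/2))^2 := by
    have h1 : Real.sin (θ/2)^2 = 1/2 - Real.cos (2*(θ/2))/2 := Real.sin_sq_eq_half_sub _
    rw [show 2*(θ/2) = θ by ring] at h1
    have h2 := Real.sin_sq_add_cos_sq θ
    linear_combination h2 - 4*h1
  rw [key, Real.sqrt_sq_eq_abs, abs_mul, abs_two]

/-- **Lower bound on the Fourier coefficients of the moving control profile.**
Let `σ ∈ (0,1)` be a quadratic irrational and `a ∈ ℝ`. Let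
`b̃ = 1_{[a, a+σπ]} - 1_{[a+σπ, a+2σπ]}` on the torus `𝕋 = ℝ/2πℤ` (the intervals being
understood modulo `2π`, the coefficient `β̃_k = ∫_𝕋 b̃(x) e^{-ikx} dx` is computed on the
fundamental domain `(a, a+2π]`).  Then `β̃_0 = 0` and `|β̃_k| ≥ C/|k|³` for all `k ≠ 0`. -/
theorem fourier_coeff_lower_bound_quadratic_irrational
    (σ : ℝ) (hσ : σ ∈ Ioo (0:ℝ) 1) (hirr : Irrational σ)
    (hquad : ∃ A B C : ℤ, A ≠ 0 ∧ (A:ℝ) * σ^2 + (B:ℝ) * σ + (C:ℝ) = 0)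
    (a : ℝ)
    (btilde : ℝ → ℝ)
    (hb : btilde = fun x => indicator (Icc a (a + σ * π)) (fun _ => (1:ℝ)) x
        - indicator (Icc (a + σ * π) (a + 2 * σ * π)) (fun _ => (1:ℝ)) x)
    (β : ℤ → ℂ)
    (hβ : β = fun k : ℤ => ∫ x in Ioc a (a + 2 * π),
        (btilde x : ℂ) * Complex.exp (-Complex.I * (k:ℂ) * (x:ℂ))) :
    β 0 = 0 ∧ ∃ C > (0:ℝ), ∀ k : ℤ, k ≠ 0 → C / |(k:ℝ)|^3 ≤ ‖β k‖ := by
  obtain ⟨hσ0, hσ1⟩ := hσ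
  have hπ := Real.pi_pos
  have hord1 : a < a + σ * π := by nlinarith
  have hord2 : a + σ * π < a + 2 * σ * π := by nlinarith
  have hord3 : a + 2 * σ * π ≤ a + 2 * π := by nlinarith
  -- key: for every k, β k splits as difference of two interval integrals
  have key : ∀ k : ℤ, β k = (∫ x in Ioc a (a + σ * π),
        Complex.exp (-Complex.I * (k:ℂ) * (x:ℂ)))
      - ∫ x in Ioc (a + σ * π) (a + 2 * σ * π), Complex.exp (-Complex.I * (k:ℂ) * (x:ℂ)) := by
    intro k
    set E : ℝ → ℂ := fun x => Complex.exp (-Complex.I * (k:ℂ) * (x:ℂ)) with hE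
    have hEcont : Continuous E := by
      apply Complex.continuous_exp.comp
      continuity
    have hind1 : ∀ x : ℝ, ((indicator (Icc a (a + σ * π)) (fun _ => (1:ℝ)) x : ℝ) : ℂ) * E x
        = indicator (Icc a (a + σ * π)) E x := by
      intro x
      by_cases hx : x ∈ Icc a (a + σ * π) <;>
        simp [indicator_of_mem, indicator_of_notMem, hx]
    have hind2 : ∀ x : ℝ, ((indicator (Icc (a + σ * π) (a + 2 * σ * π)) (fun _ => (1:ℝ)) x : ℝ) : ℂ) * E x
        = indicator (Icc (a + σ * π) (a + 2 * σ * π)) E x := by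
      intro x
      by_cases hx : x ∈ Icc (a + σ * π) (a + 2 * σ * π) <;>
        simp [indicator_of_mem, indicator_of_notMem, hx]
    have hsplit : ∀ x : ℝ, (btilde x : ℂ) * E x
        = indicator (Icc a (a + σ * π)) E x - indicator (Icc (a + σ * π) (a + 2 * σ * π)) E x := by
      intro x
      rw [hb]
      push_cast
      rw [sub_mul, hind1, hind2]
    have hint : IntegrableOn E (Ioc a (a + 2 * π)) volume :=
      hEcont.integrableOn_Ioc
    have hi1 : IntegrableOn (indicator (Icc a (a + σ * π)) E) (Ioc a (a + 2 * π)) volume :=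
      hint.indicator measurableSet_Icc
    have hi2 : IntegrableOn (indicator (Icc (a + σ * π) (a + 2 * σ * π)) E) (Ioc a (a + 2 * π)) volume :=
      hint.indicator measurableSet_Icc
    rw [hβ]
    simp only
    rw [show (fun x : ℝ => (btilde x : ℂ) * Complex.exp (-Complex.I * (k:ℂ) * (x:ℂ)))
        = fun x => indicator (Icc a (a + σ * π)) E x
          - indicator (Icc (a + σ * π) (a + 2 * σ * π)) E x from funext hsplit]
    rw [integral_sub hi1 hi2]
    congr 1
    · rw [integral_indicator measurableSet_Icc, Measure.restrict_restrict measurableSet_Icc]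
      congr 1
      apply congrArg
      ext x
      simp only [mem_inter_iff, mem_Icc, mem_Ioc]
      constructor
      · rintro ⟨⟨h1, h2⟩, h3, h4⟩; exact ⟨h3, h2⟩
      · rintro ⟨h1, h2⟩
        exact ⟨⟨h1.le, h2⟩, h1, le_trans h2 (le_trans hord2.le hord3)⟩
    · rw [integral_indicator measurableSet_Icc, Measure.restrict_restrict measurableSet_Icc]
      rw [show Icc (a + σ * π) (a + 2 * σ * π) ∩ Ioc a (a + 2 * π) = Icc (a + σ * π) (a + 2 * σ * π) from ?_]
      · exact integral_Icc_eq_integral_Ioc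
      · apply inter_eq_self_of_subset_left
        intro x hx
        simp only [mem_Icc] at hx
        exact ⟨lt_of_lt_of_le hord1 hx.1, le_trans hx.2 hord3⟩
  constructor
  · -- β 0 = 0
    have h0 := key 0
    simp only [Int.cast_zero, mul_zero, zero_mul, Complex.exp_zero] at h0
    rw [h0]
    simp [Real.volume_Ioc]
    ring_nf
  · -- lower bound
    obtain ⟨c₂, hc₂, hL⟩ := quad_liouville σ hirr hquad
    -- sin lower bound: for k ≠ 0, c₂/(2|k|) ≤ |sin(k σ π / 2)|
    have hsin : ∀ k : ℤ, k ≠ 0 → c₂ / |(k:ℝ)| ≤ |Real.sin ((k:ℝ) * σ * π / 2)| := by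
      intro k hk
      have hk0 : (k:ℝ) ≠ 0 := Int.cast_ne_zero.mpr hk
      have hkpos : 0 < |(k:ℝ)| := abs_pos.mpr hk0
      set t : ℝ := (k:ℝ) * σ / 2 - round ((k:ℝ) * σ / 2) with ht
      set m : ℤ := round ((k:ℝ) * σ / 2) with hm
      have htb : |t| ≤ 1 / 2 := abs_sub_round _
      have hltt : c₂ / (2 * |(k:ℝ)|) ≤ |t| := by
        have hrw : t = ((k:ℝ) / 2) * (σ - (2 * m : ℤ) / k) := by
          push_cast
          field_simp [ht]
          ring
        rw [hrw, abs_mul]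
        have h1 : c₂ / (k:ℝ)^2 ≤ |σ - ((2 * m : ℤ):ℝ) / (k:ℝ)| := hL (2 * m) k hk
        have h2 : |(k:ℝ) / 2| = |(k:ℝ)| / 2 := by rw [abs_div]; norm_num
        rw [h2]
        have hsq : (k:ℝ)^2 = |(k:ℝ)|^2 := (sq_abs _).symm
        rw [hsq] at h1
        have hkabs0 : |(k:ℝ)| ≠ 0 := ne_of_gt (abs_pos.mpr hk0)
        calc c₂ / (2 * |(k:ℝ)|) = (|(k:ℝ)| / 2) * (c₂ / |(k:ℝ)|^2) := by
              field_simp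
          _ ≤ (|(k:ℝ)| / 2) * |σ - ((2 * m : ℤ):ℝ) / (k:ℝ)| := by
              apply mul_le_mul_of_nonneg_left h1 (by positivity)
      have hsineq : Real.sin ((k:ℝ) * σ * π / 2) = (-1)^m * Real.sin (π * t) := by
        rw [show (k:ℝ) * σ * π / 2 = π * t + (m:ℝ) * π by rw [ht]; push_cast; ring]
        exact Real.sin_add_int_mul_pi _ m
      rw [hsineq, abs_mul]
      have habs1 : |((-1:ℝ))^m| = 1 := by
        rcases Int.even_or_odd m with h | h
        · rw [h.neg_one_zpow, abs_one]
        · rw [h.neg_one_zpow, abs_neg, abs_one]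
      rw [habs1, one_mul]
      have hptb : |π * t| ≤ π / 2 := by
        rw [abs_mul, abs_of_pos hπ]
        calc π * |t| ≤ π * (1/2) := by nlinarith [htb]
          _ = π / 2 := by ring
      have hjordan := Real.mul_abs_le_abs_sin hptb
      have : 2 / π * |π * t| = 2 * |t| := by
        rw [abs_mul, abs_of_pos hπ]
        field_simp
      rw [this] at hjordan
      calc c₂ / |(k:ℝ)| = 2 * (c₂ / (2 * |(k:ℝ)|)) := by field_simp
        _ ≤ 2 * |t| := by linarith [hltt]
        _ ≤ |Real.sin (π * t)| := hjordan
    refine ⟨4 * c₂^2, by positivity, fun k hk => ?_⟩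
    have hk0 : (k:ℝ) ≠ 0 := Int.cast_ne_zero.mpr hk
    have hkpos : 0 < |(k:ℝ)| := abs_pos.mpr hk0
    -- compute β k explicitly
    set w : ℂ := -Complex.I * (k:ℂ) with hw
    have hw0 : w ≠ 0 := by
      simp [hw, Complex.I_ne_zero, Int.cast_ne_zero.mpr hk]
    have hInt1 : (∫ x in Ioc a (a + σ * π), Complex.exp (-Complex.I * (k:ℂ) * (x:ℂ)))
        = (Complex.exp (w * ((a + σ * π : ℝ):ℂ)) - Complex.exp (w * ((a : ℝ):ℂ))) / w := by
      rw [← intervalIntegral.integral_of_le hord1.le]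
      rw [show (fun x : ℝ => Complex.exp (-Complex.I * (k:ℂ) * (x:ℂ)))
          = fun x : ℝ => Complex.exp (w * (x:ℂ)) from funext fun x => by rw [hw, mul_assoc]]
      exact integral_exp_mul_complex hw0
    have hInt2 : (∫ x in Ioc (a + σ * π) (a + 2 * σ * π), Complex.exp (-Complex.I * (k:ℂ) * (x:ℂ)))
        = (Complex.exp (w * ((a + 2 * σ * π : ℝ):ℂ)) - Complex.exp (w * ((a + σ * π : ℝ):ℂ))) / w := by
      rw [← intervalIntegral.integral_of_le hord2.le]
      rw [show (fun x : ℝ => Complex.exp (-Complex.I * (k:ℂ) * (x:ℂ)))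
          = fun x : ℝ => Complex.exp (w * (x:ℂ)) from funext fun x => by rw [hw, mul_assoc]]
      exact integral_exp_mul_complex hw0
    have hβk : β k = -(Complex.exp (w * ((a:ℝ):ℂ)) * (1 - Complex.exp (w * ((σ * π : ℝ):ℂ)))^2) / w := by
      rw [key k, hInt1, hInt2]
      have e1 : Complex.exp (w * ((a + σ * π : ℝ):ℂ)) = Complex.exp (w * a) * Complex.exp (w * (σ * π)) := by
        rw [← Complex.exp_add]
        congr 1
        push_cast
        ring
      have e2 : Complex.exp (w * ((a + 2 * σ * π : ℝ):ℂ)) = Complex.exp (w * a) * Complex.exp (w * (σ * π))^2 := by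
        rw [sq, ← Complex.exp_add, ← Complex.exp_add]
        congr 1
        push_cast
        ring
      rw [e1, e2]
      field_simp
      push_cast; ring
    -- norm computation
    have hnw : ‖w‖ = |(k:ℝ)| := by
      rw [hw, norm_mul, norm_neg, Complex.norm_I, one_mul]
      rw [show ((k:ℂ)) = (((k:ℝ)):ℂ) by push_cast; rfl, Complex.norm_real, Real.norm_eq_abs]
    have hnE : ‖Complex.exp (w * ((a:ℝ):ℂ))‖ = 1 := by
      rw [Complex.norm_exp]
      have h0 : (w * ((a:ℝ):ℂ)).re = 0 := by
        rw [hw]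
        simp [Complex.mul_re]
      rw [h0, Real.exp_zero]
    have hexparg : w * ((σ * π : ℝ):ℂ) = ((-(k:ℝ) * (σ * π) : ℝ):ℂ) * Complex.I := by
      rw [hw]
      push_cast
      ring
    have hnorm : ‖β k‖ = 4 * |Real.sin ((k:ℝ) * σ * π / 2)|^2 / |(k:ℝ)| := by
      rw [hβk]
      rw [norm_div, norm_neg, norm_mul, hnE, one_mul, norm_pow, hnw]
      have : ‖(1:ℂ) - Complex.exp (w * ((σ * π : ℝ):ℂ))‖ = 2 * |Real.sin ((-(k:ℝ) * (σ * π)) / 2)| := by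
        rw [hexparg]
        exact norm_one_sub_exp_mul_I _
      push_cast at this ⊢
      rw [this]
      rw [show (-(k:ℝ) * (σ * π)) / 2 = -((k:ℝ) * σ * π / 2) by ring, Real.sin_neg, abs_neg]
      ring
    rw [hnorm]
    have hs := hsin k hk
    have hs0 : 0 ≤ c₂ / |(k:ℝ)| := by positivity
    have hsq : (c₂ / |(k:ℝ)|)^2 ≤ |Real.sin ((k:ℝ) * σ * π / 2)|^2 := by
      apply pow_le_pow_left₀ hs0 hs
    calc 4 * c₂^2 / |(k:ℝ)|^3 = 4 * (c₂ / |(k:ℝ)|)^2 / |(k:ℝ)| := by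
          field_simp
      _ ≤ 4 * |Real.sin ((k:ℝ) * σ * π / 2)|^2 / |(k:ℝ)| := by
          gcongr
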